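/- The pair (θ₁, θ₂) = (2H+1, 2H) is the unique critical point in (0,∞)² of the function R(θ₁, θ₂) = (1 + θ₁ + θ₂)·(1 + 1/θ₁)^{H+1}·(1 + 1/θ₂)^H, for every positive integer H. In particular, at any critical point one has θ₁ = θ₂ + 1. -/

import Mathlib

lemma aux_log1 (b x : ℝ) (hb : 0 < b) (hx : 0 < x) :
    HasDerivAt (fun t : ℝ => Real.log (1 + t + b)) (1 / (1 + x + b)) x := by
  have h : HasDerivAt (fun t : ℝ => 1 + t + b) 1 x := by
    simpa using ((hasDerivAt_id x).const_add 1).add_const b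
  have hne : (1 : ℝ) + x + b ≠ 0 := by positivity
  simpa using h.log hne

lemma aux_log2 (x : ℝ) (hx : 0 < x) :
    HasDerivAt (fun t : ℝ => Real.log (1 + 1 / t)) (-(1 / (x + x ^ 2))) x := by
  have h : HasDerivAt (fun t : ℝ => 1 + 1 / t) (-(1 / x ^ 2)) x := by
    simpa using (hasDerivAt_inv hx.ne').const_add 1
  have hne : (1 : ℝ) + 1 / x ≠ 0 := by positivity
  have := h.log hne
  convert this using 1
  field_simp
  ring

theorem stmt_9 (H : ℕ) (hH : 0 < H) (θ₁ θ₂ : ℝ) (h₁ : 0 < θ₁) (h₂ : 0 < θ₂) :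
    HasDerivAt
      (fun t : ℝ => Real.log (1 + t + θ₂) + ((H : ℝ) + 1) * Real.log (1 + 1 / t)
        + (H : ℝ) * Real.log (1 + 1 / θ₂))
      (1 / (1 + θ₁ + θ₂) - ((H : ℝ) + 1) / (θ₁ + θ₁ ^ 2)) θ₁ ∧
    HasDerivAt
      (fun t : ℝ => Real.log (1 + θ₁ + t) + ((H : ℝ) + 1) * Real.log (1 + 1 / θ₁)
        + (H : ℝ) * Real.log (1 + 1 / t))
      (1 / (1 + θ₁ + θ₂) - (H : ℝ) / (θ₂ + θ₂ ^ 2)) θ₂ ∧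
    ((1 / (1 + θ₁ + θ₂) - ((H : ℝ) + 1) / (θ₁ + θ₁ ^ 2) = 0 ∧
      1 / (1 + θ₁ + θ₂) - (H : ℝ) / (θ₂ + θ₂ ^ 2) = 0) ↔
      (θ₁ = 2 * (H : ℝ) + 1 ∧ θ₂ = 2 * (H : ℝ))) ∧
    ((1 / (1 + θ₁ + θ₂) - ((H : ℝ) + 1) / (θ₁ + θ₁ ^ 2) = 0 ∧
      1 / (1 + θ₁ + θ₂) - (H : ℝ) / (θ₂ + θ₂ ^ 2) = 0) → θ₁ = θ₂ + 1) := by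
  have hS : (0:ℝ) < 1 + θ₁ + θ₂ := by linarith
  have hA : (0:ℝ) < θ₁ + θ₁ ^ 2 := by positivity
  have hB : (0:ℝ) < θ₂ + θ₂ ^ 2 := by positivity
  have hHpos : (0:ℝ) < (H : ℝ) := by exact_mod_cast hH
  refine ⟨?_, ?_, ?_, ?_⟩
  · have d1 := aux_log1 θ₂ θ₁ h₂ h₁
    have d2 := (aux_log2 θ₁ h₁).const_mul ((H : ℝ) + 1)
    have := (d1.add d2).add_const ((H : ℝ) * Real.log (1 + 1 / θ₂))
    exact this.congr_deriv (by ring)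
  · have hne : (1:ℝ) + θ₁ + θ₂ ≠ 0 := hS.ne'
    have d1 : HasDerivAt (fun t : ℝ => Real.log (1 + θ₁ + t)) (1 / (1 + θ₁ + θ₂)) θ₂ := by
      have h : HasDerivAt (fun t : ℝ => 1 + θ₁ + t) 1 θ₂ := by
        simpa using (hasDerivAt_id θ₂).const_add (1 + θ₁)
      simpa using h.log hne
    have d2 := (aux_log2 θ₂ h₂).const_mul (H : ℝ)
    have := (d1.add (hasDerivAt_const θ₂ (((H : ℝ) + 1) * Real.log (1 + 1 / θ₁)))).add d2
    exact this.congr_deriv (by ring)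
  · constructor
    · rintro ⟨e1, e2⟩
      have E1 : θ₁ + θ₁ ^ 2 = ((H : ℝ) + 1) * (1 + θ₁ + θ₂) := by
        have := sub_eq_zero.mp e1
        field_simp at this
        linarith
      have E2 : θ₂ + θ₂ ^ 2 = (H : ℝ) * (1 + θ₁ + θ₂) := by
        have := sub_eq_zero.mp e2
        field_simp at this
        linarith
      have hdiff : (θ₁ - θ₂ - 1) * (1 + θ₁ + θ₂) = 0 := by nlinarith
      have h12 : θ₁ = θ₂ + 1 := by
        rcases mul_eq_zero.mp hdiff with h | h
        · linarith
        · linarith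
      have hθ2 : θ₂ = 2 * (H : ℝ) := by
        have : (θ₂ - 2 * (H : ℝ)) * (1 + θ₂) = 0 := by nlinarith [E2, h12]
        rcases mul_eq_zero.mp this with h | h
        · linarith
        · linarith
      exact ⟨by rw [h12, hθ2], hθ2⟩
    · rintro ⟨rfl, rfl⟩
      constructor
      · rw [sub_eq_zero]
        rw [div_eq_div_iff (by positivity) (by positivity)]
        ring
      · rw [sub_eq_zero]
        rw [div_eq_div_iff (by positivity) (by positivity)]
        ring
  · rintro ⟨e1, e2⟩
    have E1 : θ₁ + θ₁ ^ 2 = ((H : ℝ) + 1) * (1 + θ₁ + θ₂) := by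
      have := sub_eq_zero.mp e1
      field_simp at this
      linarith
    have E2 : θ₂ + θ₂ ^ 2 = (H : ℝ) * (1 + θ₁ + θ₂) := by
      have := sub_eq_zero.mp e2
      field_simp at this
      linarith
    have hdiff : (θ₁ - θ₂ - 1) * (1 + θ₁ + θ₂) = 0 := by nlinarith
    rcases mul_eq_zero.mp hdiff with h | h
    · linarith
    · linarith
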